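/- Suppose F = f + Ψ where f : ℝⁿ → ℝ is convex and L-smooth (L > 0) and Ψ : ℝⁿ → ℝ ∪ {+∞} is proper, closed and convex. Then for all x, y ∈ ℝⁿ, F(x̄) ≤ F(y) + ⟨G_{1/L}(x), x − y⟩ − (1/(2L))‖G_{1/L}(x)‖², where x̄ = x − G_{1/L}(x)/L. Moreover, without the convexity assumption on f (f only L-smooth), the inequality F(x̄) ≤ F(x) − (1/(2L))‖G_{1/L}(x)‖² still holds for all x. -/

import Mathlib

/-!
Let `p = prox_{Ψ/L}(x - ∇f(x)/L)`, so that `x̄ = p` and `G_{1/L}(x) = L (x - p)`. Comparing `p`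
with the points of a segment `[p, z]` in the defining minimization and letting the point tend to
`p` gives the optimality condition `L (x - ∇f(x)/L - p) ∈ ∂Ψ(p)`. Adding this subgradient
inequality at `y` to the descent lemma `f(p) ≤ f(x) + ⟪∇f(x), p - x⟫ + L/2 ‖p - x‖²` yields
`F(x̄) ≤ f(x) + ⟪∇f(x), y - x⟫ + Ψ(y) + ⟪G, x - y⟫ - ‖G‖²/(2L)` for every `y`. Taking `y = x`
gives the second inequality; for convex `f`, the gradient inequality
`f(x) + ⟪∇f(x), y - x⟫ ≤ f(y)`, obtained by the same segment argument, gives the first.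
-/

open scoped RealInnerProductSpace
open Filter Topology

theorem add_le_of_forall_segment_bound {a b c K : ℝ}
    (h : ∀ s : ℝ, 0 < s → s ≤ 1 → a + s * c - s ^ 2 * K ≤ (1 - s) * a + s * b) :
    a + c ≤ b := by
  have hslope : ∀ s ∈ Set.Ioc (0 : ℝ) 1, a + c - b ≤ s * K := fun s ⟨hs0, hs1⟩ =>
    le_of_mul_le_mul_left (by nlinarith [h s hs0 hs1]) hs0
  have hlim : Tendsto (fun s : ℝ => s * K) (𝓝[>] 0) (𝓝 0) := by
    simpa using (continuous_mul_const K).continuousAt.tendsto.mono_left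
      (nhdsWithin_le_nhds (a := (0 : ℝ)))
  have := ge_of_tendsto hlim (eventually_of_mem (Ioc_mem_nhdsGT one_pos) hslope)
  linarith

theorem EReal.exists_coe_eq_of_le_coe {a : EReal} {r : ℝ} (ha : a ≠ ⊥) (h : a ≤ r) :
    ∃ c : ℝ, a = c ∧ c ≤ r := by
  induction a using EReal.rec with
  | bot => exact absurd rfl ha
  | coe c => exact ⟨c, rfl, EReal.coe_le_coe_iff.mp h⟩
  | top => exact absurd h (by simp)

section Convexity

variable {E : Type*} [NormedAddCommGroup E] [InnerProductSpace ℝ E]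

theorem ConvexOn.add_inner_le_of_abs_le {f : E → ℝ} {f' : E → E} {L : ℝ}
    (hf : ConvexOn ℝ Set.univ f)
    (hsmooth : ∀ x y, |f x - f y - ⟪f' y, x - y⟫| ≤ L / 2 * ‖x - y‖ ^ 2) (x y : E) :
    f x + ⟪f' x, y - x⟫ ≤ f y := by
  refine add_le_of_forall_segment_bound (K := L / 2 * ‖y - x‖ ^ 2) fun s hs0 hs1 => ?_
  have hconv := hf.2 (Set.mem_univ x) (Set.mem_univ y) (sub_nonneg.mpr hs1) hs0.le
    (sub_add_cancel 1 s)
  have hstep : (1 - s) • x + s • y - x = s • (y - x) := by module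
  have hlower := (abs_le.mp (hsmooth ((1 - s) • x + s • y) x)).1
  rw [hstep, real_inner_smul_right, norm_smul, mul_pow, Real.norm_eq_abs, sq_abs] at hlower
  simp only [smul_eq_mul] at hconv
  linarith

variable {Ψ : E → EReal}

theorem exists_coe_eq_convex_comb_le (hbot : ∀ x, Ψ x ≠ ⊥)
    (hconvex : ∀ x y : E, ∀ a b : ℝ, 0 ≤ a → 0 ≤ b → a + b = 1 →
      Ψ (a • x + b • y) ≤ (a : EReal) * Ψ x + (b : EReal) * Ψ y)
    {x y : E} {a b s : ℝ} (hx : Ψ x = a) (hy : Ψ y = b) (hs0 : 0 ≤ s) (hs1 : s ≤ 1) :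
    ∃ c : ℝ, Ψ ((1 - s) • x + s • y) = c ∧ c ≤ (1 - s) * a + s * b := by
  have h := hconvex x y (1 - s) s (sub_nonneg.mpr hs1) hs0 (sub_add_cancel 1 s)
  rw [hx, hy, ← EReal.coe_mul, ← EReal.coe_mul, ← EReal.coe_add] at h
  exact EReal.exists_coe_eq_of_le_coe (hbot _) h

end Convexity

section Prox

variable {E : Type*} [NormedAddCommGroup E]

def IsProxPoint (Ψ : E → EReal) (t : ℝ) (u p : E) : Prop :=
  ∀ z, Ψ p + ((‖u - p‖ ^ 2 / (2 * t) : ℝ) : EReal) ≤ Ψ z + ((‖u - z‖ ^ 2 / (2 * t) : ℝ) : EReal)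

variable {Ψ : E → EReal} {t : ℝ} {u p : E}

theorem IsProxPoint.exists_coe_eq (hp : IsProxPoint Ψ t u p) (hbot : Ψ p ≠ ⊥) {z : E} {b : ℝ}
    (hz : Ψ z = b) : ∃ c : ℝ, Ψ p = c := by
  have htop : Ψ p ≠ ⊤ := fun htop => by
    simpa [htop, hz, ← EReal.coe_add] using hp z
  exact ⟨_, (EReal.coe_toReal htop hbot).symm⟩

variable [InnerProductSpace ℝ E]

theorem IsProxPoint.add_inner_le (hp : IsProxPoint Ψ t u p) (hbot : ∀ x, Ψ x ≠ ⊥)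
    (hconvex : ∀ x y : E, ∀ a b : ℝ, 0 ≤ a → 0 ≤ b → a + b = 1 →
      Ψ (a • x + b • y) ≤ (a : EReal) * Ψ x + (b : EReal) * Ψ y)
    {a b : ℝ} (hpa : Ψ p = a) {z : E} (hzb : Ψ z = b) :
    a + t⁻¹ * ⟪u - p, z - p⟫ ≤ b := by
  refine add_le_of_forall_segment_bound (K := ‖z - p‖ ^ 2 / (2 * t)) fun s hs0 hs1 => ?_
  obtain ⟨c, hwc, hc⟩ := exists_coe_eq_convex_comb_le hbot hconvex hpa hzb hs0.le hs1
  have hmin := hp ((1 - s) • p + s • z)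
  rw [hpa, hwc, ← EReal.coe_add, ← EReal.coe_add, EReal.coe_le_coe_iff] at hmin
  have hstep : u - ((1 - s) • p + s • z) = (u - p) - s • (z - p) := by module
  rw [hstep, norm_sub_sq_real (u - p), real_inner_smul_right, norm_smul, mul_pow, Real.norm_eq_abs,
    sq_abs] at hmin
  have hquad : (‖u - p‖ ^ 2 - 2 * (s * ⟪u - p, z - p⟫) + s ^ 2 * ‖z - p‖ ^ 2) / (2 * t)
      = ‖u - p‖ ^ 2 / (2 * t) - s * (t⁻¹ * ⟪u - p, z - p⟫) + s ^ 2 * (‖z - p‖ ^ 2 / (2 * t)) := by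
    ring
  linarith

end Prox

section ProxGradient

variable {E : Type*} [NormedAddCommGroup E] [InnerProductSpace ℝ E] {f : E → ℝ} {f' : E → E}
  {L : ℝ} {Ψ : E → EReal}

theorem IsProxPoint.prox_grad_le (hL : L ≠ 0)
    (hsmooth : ∀ x y, |f x - f y - ⟪f' y, x - y⟫| ≤ L / 2 * ‖x - y‖ ^ 2)
    (hbot : ∀ x, Ψ x ≠ ⊥)
    (hconvex : ∀ x y : E, ∀ a b : ℝ, 0 ≤ a → 0 ≤ b → a + b = 1 →
      Ψ (a • x + b • y) ≤ (a : EReal) * Ψ x + (b : EReal) * Ψ y)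
    {x p : E} (hp : IsProxPoint Ψ L⁻¹ (x - L⁻¹ • f' x) p) (y : E) :
    (f p : EReal) + Ψ p ≤ ((f x + ⟪f' x, y - x⟫ + ⟪L • (x - p), x - y⟫
      - (2 * L)⁻¹ * ‖L • (x - p)‖ ^ 2 : ℝ) : EReal) + Ψ y := by
  by_cases hy : Ψ y = ⊤
  · rw [hy, EReal.add_top_of_ne_bot (EReal.coe_ne_bot _)]
    exact le_top
  obtain ⟨b, hyb⟩ : ∃ b : ℝ, Ψ y = b := ⟨_, (EReal.coe_toReal hy (hbot y)).symm⟩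
  obtain ⟨a, hpa⟩ := hp.exists_coe_eq (hbot p) hyb
  have hsubgrad := hp.add_inner_le hbot hconvex hpa hyb
  have hdescent := (abs_le.mp (hsmooth p x)).2
  rw [hpa, hyb, ← EReal.coe_add, ← EReal.coe_add, EReal.coe_le_coe_iff]
  have hsplit : x - L⁻¹ • f' x - p = (x - p) - L⁻¹ • f' x := by module
  have hyp : y - p = (x - p) - (x - y) := by module
  have hyx : y - x = -(x - y) := by module
  have hpx : p - x = -(x - p) := by module
  rw [hsplit, hyp] at hsubgrad
  rw [hpx] at hdescent
  rw [hyx]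
  generalize x - p = d at *
  generalize x - y = w at *
  simp only [inner_sub_left, inner_sub_right, inner_neg_right, real_inner_smul_left,
    norm_neg, norm_smul, Real.norm_eq_abs, mul_pow, sq_abs, inv_inv,
    real_inner_self_eq_norm_sq, real_inner_comm d (f' x)] at hsubgrad hdescent ⊢
  field_simp at hsubgrad ⊢
  linarith

end ProxGradient

theorem prox_gradient_descent_inequalities_general {n : ℕ} (L : ℝ) (hL : 0 < L)
    (f : EuclideanSpace ℝ (Fin n) → ℝ)
    (f' : EuclideanSpace ℝ (Fin n) → EuclideanSpace ℝ (Fin n))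
    (hsmooth : ∀ x y : EuclideanSpace ℝ (Fin n),
      |f x - f y - ⟪f' y, x - y⟫| ≤ L / 2 * ‖x - y‖ ^ 2)
    (Ψ : EuclideanSpace ℝ (Fin n) → EReal)
    (hproper : (∀ x, Ψ x ≠ ⊥) ∧ (∃ x, Ψ x ≠ ⊤))
    (hconvex : ∀ x y : EuclideanSpace ℝ (Fin n), ∀ a b : ℝ, 0 ≤ a → 0 ≤ b → a + b = 1 →
      Ψ (a • x + b • y) ≤ (a : EReal) * Ψ x + (b : EReal) * Ψ y)
    (prox : ℝ → EuclideanSpace ℝ (Fin n) → EuclideanSpace ℝ (Fin n))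
    (hprox : ∀ t : ℝ, 0 < t → ∀ x z : EuclideanSpace ℝ (Fin n),
      Ψ (prox t x) + ((‖x - prox t x‖ ^ 2 / (2 * t) : ℝ) : EReal)
        ≤ Ψ z + ((‖x - z‖ ^ 2 / (2 * t) : ℝ) : EReal))
    (F : EuclideanSpace ℝ (Fin n) → EReal)
    (hF : ∀ x, F x = (f x : EReal) + Ψ x)
    (G : ℝ → EuclideanSpace ℝ (Fin n) → EuclideanSpace ℝ (Fin n))
    (hG : ∀ t x, G t x = t⁻¹ • (x - prox t (x - t • f' x))) :
    (ConvexOn ℝ Set.univ f →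
      ∀ x y : EuclideanSpace ℝ (Fin n),
        F (x - (1 / L) • G (1 / L) x)
          ≤ F y + ((⟪G (1 / L) x, x - y⟫ - 1 / (2 * L) * ‖G (1 / L) x‖ ^ 2 : ℝ) : EReal)) ∧
    (∀ x : EuclideanSpace ℝ (Fin n),
      F (x - (1 / L) • G (1 / L) x)
        ≤ F x - ((1 / (2 * L) * ‖G (1 / L) x‖ ^ 2 : ℝ) : EReal)) := by
  have hfund : ∀ x y, F (x - (1 / L) • G (1 / L) x) ≤ ((f x + ⟪f' x, y - x⟫
      + ⟪G (1 / L) x, x - y⟫ - 1 / (2 * L) * ‖G (1 / L) x‖ ^ 2 : ℝ) : EReal) + Ψ y := by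
    intro x y
    set p := prox L⁻¹ (x - L⁻¹ • f' x)
    have hGx : G L⁻¹ x = L • (x - p) := by rw [hG, inv_inv]
    have hstep : x - L⁻¹ • G L⁻¹ x = p := by
      rw [hGx, smul_smul, inv_mul_cancel₀ hL.ne', one_smul, sub_sub_cancel]
    have hp : IsProxPoint Ψ L⁻¹ (x - L⁻¹ • f' x) p := hprox _ (inv_pos.mpr hL) _
    simp only [one_div]
    rw [hF, hstep, hGx]
    exact hp.prox_grad_le hL.ne' hsmooth hproper.1 hconvex y
  refine ⟨fun hf x y => (hfund x y).trans ?_, fun x => (hfund x x).trans_eq ?_⟩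
  · rw [hF, add_right_comm (f y : EReal), ← EReal.coe_add]
    gcongr
    linarith [hf.add_inner_le_of_abs_le hsmooth x y]
  · rw [hF, sub_eq_add_neg (_ + Ψ x), add_right_comm (f x : EReal), ← EReal.coe_neg,
      ← EReal.coe_add]
    simp only [sub_self, inner_zero_right, add_zero, sub_eq_add_neg]

/-- descent-type inequalities for the prox-gradient step.
The first inequality requires convexity of `f`; the final inequality
(`y = x` case) holds without convexity. -/
theorem prox_gradient_descent_inequalities {n : ℕ} (L : ℝ) (hL : 0 < L)
    (f : EuclideanSpace ℝ (Fin n) → ℝ)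
    (f' : EuclideanSpace ℝ (Fin n) → EuclideanSpace ℝ (Fin n))
    (hdiff : ∀ x, HasGradientAt f (f' x) x)
    (hsmooth : ∀ x y : EuclideanSpace ℝ (Fin n),
      |f x - f y - ⟪f' y, x - y⟫| ≤ L / 2 * ‖x - y‖ ^ 2)
    (Ψ : EuclideanSpace ℝ (Fin n) → EReal)
    (hproper : (∀ x, Ψ x ≠ ⊥) ∧ (∃ x, Ψ x ≠ ⊤))
    (hclosed : LowerSemicontinuous Ψ)
    (hconvex : ∀ x y : EuclideanSpace ℝ (Fin n), ∀ a b : ℝ, 0 ≤ a → 0 ≤ b → a + b = 1 →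
      Ψ (a • x + b • y) ≤ (a : EReal) * Ψ x + (b : EReal) * Ψ y)
    (prox : ℝ → EuclideanSpace ℝ (Fin n) → EuclideanSpace ℝ (Fin n))
    (hprox : ∀ t : ℝ, 0 < t → ∀ x z : EuclideanSpace ℝ (Fin n),
      Ψ (prox t x) + ((‖x - prox t x‖ ^ 2 / (2 * t) : ℝ) : EReal)
        ≤ Ψ z + ((‖x - z‖ ^ 2 / (2 * t) : ℝ) : EReal))
    (F : EuclideanSpace ℝ (Fin n) → EReal)
    (hF : ∀ x, F x = (f x : EReal) + Ψ x)
    (G : ℝ → EuclideanSpace ℝ (Fin n) → EuclideanSpace ℝ (Fin n))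
    (hG : ∀ t x, G t x = t⁻¹ • (x - prox t (x - t • f' x))) :
    (ConvexOn ℝ Set.univ f →
      ∀ x y : EuclideanSpace ℝ (Fin n),
        F (x - (1 / L) • G (1 / L) x)
          ≤ F y + ((⟪G (1 / L) x, x - y⟫ - 1 / (2 * L) * ‖G (1 / L) x‖ ^ 2 : ℝ) : EReal)) ∧
    (∀ x : EuclideanSpace ℝ (Fin n),
      F (x - (1 / L) • G (1 / L) x)
        ≤ F x - ((1 / (2 * L) * ‖G (1 / L) x‖ ^ 2 : ℝ) : EReal)) :=
  prox_gradient_descent_inequalities_general L hL f f' hsmooth Ψ hproper hconvex prox hprox F hF G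
    hG
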